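/- Let G be a trivalent, 2-edge-connected finite graph. Then every circuit C of the graph curve matroid M_G satisfies r*(δ(C)) = |C|. -/

import Mathlib

/-- A finite undirected multigraph on vertex type `V` with edge type `E`:
each edge has an unordered pair of endpoints (possibly a loop). -/
structure Multigraph (V E : Type*) where
  ends : E → Sym2 V

namespace Multigraph

variable {V E : Type*} (G : Multigraph V E)

/-- `δ(A)`: the set of edges incident to at least one vertex of `A`. -/
def inc (A : Set V) : Set E := {e | ∃ v ∈ A, v ∈ G.ends e}

/-- Number of connected components of the spanning subgraph of `G`
with edge set `B` (on the full vertex set `V`). -/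
noncomputable def numComponentsEdges (B : Set E) : ℕ :=
  Nat.card (Quot (fun u v : V => ∃ e ∈ B, G.ends e = s(u, v)))

/-- Number of connected components `ω(S)` of the subgraph of `G` induced on `S`. -/
noncomputable def numComponentsSub (S : Set V) : ℕ :=
  Nat.card (Quot (fun x y : S => ∃ e, G.ends e = s(x.1, y.1)))

/-- Rank function of the cycle (graphic) matroid of `G`:
`r(B) = |V| - (number of components of (V, B))`. -/
noncomputable def cycleRank (B : Set E) : ℕ :=
  Nat.card V - G.numComponentsEdges B

/-- Rank function `r*` of the bond (cographic) matroid of `G`: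
`r*(B) = |B| + r(E - B) - r(E)`. -/
noncomputable def bondRank (B : Set E) : ℕ :=
  B.ncard + G.cycleRank Bᶜ - G.cycleRank Set.univ

/-- `G` is connected. -/
def Connected : Prop := G.numComponentsEdges Set.univ = 1

/-- `G` is 2-edge-connected: it is connected and deleting any single edge
leaves it connected. -/
def TwoEdgeConnected : Prop :=
  G.Connected ∧ ∀ e : E, G.numComponentsEdges {e}ᶜ = 1

/-- `G` is 2-vertex-connected: it is connected and deleting any single vertex
leaves it connected. -/
def TwoVertexConnected : Prop :=
  G.Connected ∧ ∀ v : V, G.numComponentsSub {v}ᶜ = 1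

/-- `G` has no loops. -/
def Loopless : Prop := ∀ e : E, ¬ (G.ends e).IsDiag

open Classical in
/-- The degree of a vertex, with loops counting twice. -/
noncomputable def degree [Fintype E] (v : V) : ℕ :=
  ∑ e : E, (if G.ends e = s(v, v) then 2 else if v ∈ G.ends e then 1 else 0)

/-- `G` is trivalent: every vertex has degree `3`. -/
def Trivalent [Fintype E] : Prop := ∀ v : V, G.degree v = 3

/-- `A ⊆ V` is the vertex set of a cycle `v₁, …, vₙ, v₁` of `G`: there are
pairwise distinct vertices `f 0, …, f (n-1)` with range `A` and pairwise
distinct edges joining cyclically consecutive vertices. -/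
def IsCycleSet (A : Set V) : Prop :=
  ∃ n : ℕ, 0 < n ∧ ∃ f : ZMod n → V, Function.Injective f ∧ Set.range f = A ∧
    ∃ e : ZMod n → E, Function.Injective e ∧ ∀ i, G.ends (e i) = s(f i, f (i + 1))

/-- The subgraph induced on `A` contains a cycle. -/
def Cyclic (A : Set V) : Prop := ∃ C ⊆ A, G.IsCycleSet C

/-- The subgraph induced on `A` is acyclic (a forest). -/
def Acyclic (A : Set V) : Prop := ¬ G.Cyclic A

/-- `A` is a circuit of the graph curve matroid `M_G`: `A` is nonempty,
`r*(δ(A)) ≤ |A|`, and no proper nonempty subset `A'` satisfies `r*(δ(A')) ≤ |A'|`. -/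
noncomputable def IsCircuitMG (A : Set V) : Prop :=
  A.Nonempty ∧ G.bondRank (G.inc A) ≤ A.ncard ∧
    ∀ A' : Set V, A' ⊂ A → A'.Nonempty → A'.ncard < G.bondRank (G.inc A')

/-- `A` is dependent in the graph curve matroid `M_G`, i.e. contains a circuit. -/
noncomputable def DepMG (A : Set V) : Prop := ∃ C ⊆ A, G.IsCircuitMG C

/-- `A` is independent in the graph curve matroid `M_G`. -/
noncomputable def IndepMG (A : Set V) : Prop := ¬ G.DepMG A

/-- The rank function of the graph curve matroid `M_G`:
the maximal cardinality of an independent subset. -/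
noncomputable def rankMG (A : Set V) : ℕ :=
  sSup {n | ∃ I ⊆ A, G.IndepMG I ∧ I.ncard = n}

/-- `B` is a basis of the graph curve matroid `M_G`:
a maximal independent set. -/
noncomputable def IsBasisMG (B : Set V) : Prop :=
  G.IndepMG B ∧ ∀ I : Set V, G.IndepMG I → B ⊆ I → I = B

end Multigraph

/-!
If `|C| ≥ 2`, pick `v ∈ C`; minimality of `C` gives `|C| - 1 < r*(δ(C - v)) ≤ r*(δ(C))`, because
`r*` is monotone: deleting an edge splits at most one component, so `ω(E - B)` grows by at most
`|B' - B|` when `B` grows to `B'`. If `C = {v}`, trivalence gives an edge `e ∈ δ(v)`, and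
2-edge-connectivity gives `r*({e}) = 1`.
-/

section Quot

variable {α : Type*} {r r' : α → α → Prop}

theorem quot_mk_eq_or_of_eqvGen_of_le_sup_pair (a b : α)
    (hr' : ∀ u v, r' u v → r u v ∨ s(u, v) = s(a, b)) {u v : α}
    (h : Relation.EqvGen r' u v) :
    Quot.mk r u = Quot.mk r v ∨
      (Quot.mk r u = Quot.mk r a ∧ Quot.mk r v = Quot.mk r b) ∨
      (Quot.mk r u = Quot.mk r b ∧ Quot.mk r v = Quot.mk r a) := by
  induction h with
  | rel u v huv =>
    rcases hr' u v huv with h | h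
    · exact Or.inl (Quot.sound h)
    · rcases Sym2.eq_iff.mp h with ⟨rfl, rfl⟩ | ⟨rfl, rfl⟩ <;> simp
  | refl => exact Or.inl rfl
  | symm _ _ _ ih => grind
  | trans _ _ _ _ _ ih₁ ih₂ => grind

/-- Merging the classes of `a` and `b` loses at most one class. -/
theorem card_quot_le_card_quot_add_one [Finite α] (a b : α) (hle : ∀ u v, r u v → r' u v)
    (hr' : ∀ u v, r' u v → r u v ∨ s(u, v) = s(a, b)) :
    Nat.card (Quot r) ≤ Nat.card (Quot r') + 1 := by
  classical
  let g : Quot r → Option (Quot r') := fun x =>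
    if x = Quot.mk r b then none else some (Quot.map id hle x)
  have hg : Function.Injective g := by
    rintro ⟨u⟩ ⟨v⟩ huv
    by_cases hu : Quot.mk r u = Quot.mk r b <;> by_cases hv : Quot.mk r v = Quot.mk r b <;>
      simp only [g, hu, hv, if_true, if_false, reduceCtorEq, Option.some.injEq] at huv
    · exact hu.trans hv.symm
    · have := quot_mk_eq_or_of_eqvGen_of_le_sup_pair a b hr' (Quot.eq.mp huv)
      grind
  calc Nat.card (Quot r) ≤ Nat.card (Option (Quot r')) := Nat.card_le_card_of_injective g hg
    _ = Nat.card (Quot r') + 1 := Finite.card_option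

end Quot

namespace Multigraph

variable {V E : Type*} (G : Multigraph V E)

theorem inc_mono : Monotone G.inc :=
  fun _ _ h _ ⟨v, hv, hve⟩ => ⟨v, h hv, hve⟩

theorem exists_mem_ends_of_degree_ne_zero [Fintype E] {v : V} (hv : G.degree v ≠ 0) :
    ∃ e, v ∈ G.ends e := by
  classical
  contrapose! hv
  refine Finset.sum_eq_zero fun e _ => ?_
  have hloop : G.ends e ≠ s(v, v) := fun he => hv e (he ▸ Sym2.mem_mk_left v v)
  rw [if_neg hloop, if_neg (hv e)]

section Components

variable [Finite V]

theorem numComponentsEdges_le_card (B : Set E) : G.numComponentsEdges B ≤ Nat.card V :=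
  Nat.card_le_card_of_surjective (Quot.mk _) Quot.mk_surjective

theorem numComponentsEdges_le_insert_add_one (B : Set E) (e : E) :
    G.numComponentsEdges B ≤ G.numComponentsEdges (insert e B) + 1 := by
  obtain ⟨⟨a, b⟩, hab⟩ := Quot.exists_rep (G.ends e)
  refine card_quot_le_card_quot_add_one a b
    (fun _ _ ⟨f, hf, hfuv⟩ => ⟨f, Set.mem_insert_of_mem _ hf, hfuv⟩) ?_
  rintro u v ⟨f, hf | hf, hfuv⟩
  · subst hf
    exact Or.inr (hfuv.symm.trans hab.symm)
  · exact Or.inl ⟨f, hf, hfuv⟩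

theorem numComponentsEdges_le_union_add_card (B : Set E) (D : Finset E) :
    G.numComponentsEdges B ≤ G.numComponentsEdges (B ∪ D) + D.card := by
  classical
  induction D using Finset.induction_on with
  | empty => simp
  | insert e D he ih =>
    have h := G.numComponentsEdges_le_insert_add_one (B ∪ D) e
    rw [Finset.coe_insert, Set.union_insert, Finset.card_insert_of_notMem he]
    omega

theorem numComponentsEdges_le_add_ncard_diff [Finite E] {B B' : Set E} (h : B ⊆ B') :
    G.numComponentsEdges B ≤ G.numComponentsEdges B' + (B' \ B).ncard := by
  simpa [← Set.ncard_eq_toFinset_card, Set.union_sdiff_cancel h] using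
    G.numComponentsEdges_le_union_add_card B (B' \ B).toFinite.toFinset

/-- The form of `r*(B) = |B| + ω(E) - ω(E - B)` free of truncated subtraction. -/
theorem bondRank_add_numComponentsEdges_compl [Finite E] (B : Set E) :
    G.bondRank B + G.numComponentsEdges Bᶜ = B.ncard + G.numComponentsEdges Set.univ := by
  have hB := G.numComponentsEdges_le_add_ncard_diff (Set.subset_univ Bᶜ)
  rw [Set.sdiff_compl, Set.univ_inter] at hB
  have hcompl := G.numComponentsEdges_le_card Bᶜ
  have huniv := G.numComponentsEdges_le_card Set.univ
  simp only [bondRank, cycleRank]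
  omega

theorem bondRank_mono [Finite E] : Monotone G.bondRank := by
  intro B B' h
  have hcompl := G.numComponentsEdges_le_add_ncard_diff (Set.compl_subset_compl.mpr h)
  rw [compl_sdiff_compl] at hcompl
  have hdiff := Set.ncard_sdiff_add_ncard_of_subset h
  have hB := G.bondRank_add_numComponentsEdges_compl B
  have hB' := G.bondRank_add_numComponentsEdges_compl B'
  omega

theorem TwoEdgeConnected.bondRank_singleton [Finite E] (h2 : G.TwoEdgeConnected) (e : E) :
    G.bondRank {e} = 1 := by
  have h := G.bondRank_add_numComponentsEdges_compl {e}
  rw [h2.2 e, h2.1, Set.ncard_singleton] at h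
  omega

end Components

end Multigraph

/-- For a trivalent 2-edge-connected finite graph `G`, every
circuit `C` of `M_G` satisfies `r*(δ(C)) = |C|`. -/
theorem bondRank_inc_circuit_eq {V E : Type*} [Fintype V] [Fintype E]
    (G : Multigraph V E) (h3 : G.Trivalent) (h2 : G.TwoEdgeConnected)
    (C : Set V) (hC : G.IsCircuitMG C) :
    G.bondRank (G.inc C) = C.ncard := by
  obtain ⟨⟨v, hv⟩, hle, hmin⟩ := hC
  refine le_antisymm hle ?_
  by_cases hrest : (C \ {v}).Nonempty
  · have hlt := hmin _ (Set.sdiff_singleton_ssubset.mpr hv) hrest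
    have hmono := G.bondRank_mono (G.inc_mono (Set.sdiff_subset : C \ {v} ⊆ C))
    have hcard := Set.ncard_sdiff_singleton_add_one hv C.toFinite
    omega
  · have hCv : C = {v} := by
      rw [Set.not_nonempty_iff_eq_empty, Set.sdiff_eq_empty] at hrest
      exact hrest.antisymm (Set.singleton_subset_iff.mpr hv)
    obtain ⟨e, he⟩ := G.exists_mem_ends_of_degree_ne_zero (v := v) (by rw [h3 v]; norm_num)
    have hmono := G.bondRank_mono (Set.singleton_subset_iff.mpr ⟨v, hv, he⟩ : {e} ⊆ G.inc C)
    rw [h2.bondRank_singleton, hCv] at hmono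
    rwa [hCv, Set.ncard_singleton]
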